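/- Let $n, k$ be positive integers with $\gcd(k,n)=1$ and let $F$ be a finite field with $2^n$ elements. Let $\beta, \gamma \in F$ with $\beta \neq 0$. Then the linearized equation $\beta x^{2^{2k}} + \gamma x^{2^k} + \beta^{2^k} x = 0$ has at most four solutions $x \in F$. -/

import Mathlib

/-!
Write `q = 2 ^ k` and `L x = β x^(q²) + γ x^q + β^q x`. For roots `z, x` of `L`, the additive
map `w_z(x) = z x^q - z^q x` satisfies `β w^q - β^q w = z^q L x - x^q L z = 0`, so `w / β` is fixed
by `y ↦ y^q`. As `gcd(k, n) = 1`, the only such fixed points in `𝔽_(2^n)` are `0` and `1`, hence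
`w_z` maps the roots into `{0, β}`; the same argument shows that its kernel is `{0, z}` when
`z ≠ 0`. So there are at most `2 · 2` roots.
-/

open Function Finset

theorem pow_eq_self_of_pow_pow_eq_self {F : Type*} [GroupWithZero F] [Fintype F] {p n k : ℕ}
    (hF : Fintype.card F = p ^ n) (hkn : k.Coprime n) {y : F} (hy : y ^ p ^ k = y) :
    y ^ p = y := by
  have hk : IsPeriodicPt (· ^ p) k y := by simpa [IsPeriodicPt, IsFixedPt, pow_iterate] using hy
  have hn : IsPeriodicPt (· ^ p) n y := by
    simpa [IsPeriodicPt, IsFixedPt, pow_iterate, ← hF] using FiniteField.pow_card y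
  simpa [IsPeriodicPt, IsFixedPt, hkn.gcd_eq_one] using hk.gcd hn

theorem eq_zero_or_eq_of_pow_mul_eq {F : Type*} [Field F] {q : ℕ}
    (hfix : ∀ y : F, y ^ q = y → y = 0 ∨ y = 1) {u v : F} (hv : v ≠ 0)
    (h : u ^ q * v = v ^ q * u) : u = 0 ∨ u = v := by
  have hq : (u / v) ^ q = u / v := by
    rw [div_pow, div_eq_div_iff (pow_ne_zero q hv) hv]
    linear_combination h
  simpa [div_eq_iff hv, hv] using hfix _ hq

theorem AddMonoidHom.ncard_preimage_le {G H : Type*} [AddGroup G] [Finite G] [AddGroup H]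
    (φ : G →+ H) (t : Finset H) :
    (φ ⁻¹' t).ncard ≤ #t * (φ.ker : Set G).ncard := by
  have hfiber (b : H) : (φ ⁻¹' {b}).ncard ≤ (φ.ker : Set G).ncard := by
    obtain h | ⟨x, hx⟩ := (φ ⁻¹' {b}).eq_empty_or_nonempty
    · simp [h]
    have hsub : φ ⁻¹' {b} ⊆ (x + ·) '' φ.ker := fun y hy =>
      ⟨-x + y, by simp_all, by simp⟩
    exact (Set.ncard_le_ncard hsub).trans
      (Set.ncard_image_of_injective _ (add_right_injective x)).le
  calc (φ ⁻¹' t).ncard = (⋃ b ∈ t, φ ⁻¹' {b}).ncard := by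
        rw [← Set.biUnion_preimage_singleton]; rfl
    _ ≤ ∑ b ∈ t, (φ ⁻¹' {b}).ncard := t.set_ncard_biUnion_le _
    _ ≤ #t * (φ.ker : Set G).ncard := t.sum_le_card_nsmul _ _ fun b _ => hfiber b

section Linearized

variable {R : Type*} [CommRing R] (p k : ℕ)

def linearizedForm (β γ x : R) : R :=
  β * x ^ p ^ (2 * k) + γ * x ^ p ^ k + β ^ p ^ k * x

variable [ExpChar R p]

def skewForm (z : R) : R →+ R :=
  AddMonoidHom.mk' (fun x => z * x ^ p ^ k - z ^ p ^ k * x) fun x y => by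
    rw [add_pow_expChar_pow]; ring

variable {p k}

theorem skewForm_apply (z x : R) : skewForm p k z x = z * x ^ p ^ k - z ^ p ^ k * x := rfl

theorem skewForm_linearizedForm (β γ z x : R) :
    β * skewForm p k z x ^ p ^ k - β ^ p ^ k * skewForm p k z x =
      z ^ p ^ k * linearizedForm p k β γ x - x ^ p ^ k * linearizedForm p k β γ z := by
  have hpow (a : R) : (a ^ p ^ k) ^ p ^ k = a ^ p ^ (2 * k) := by
    rw [← pow_mul, ← pow_add, two_mul]
  rw [skewForm_apply, sub_pow_expChar_pow, mul_pow, mul_pow, hpow, hpow, linearizedForm,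
    linearizedForm]
  ring

end Linearized

section TrivialFixedPoints

variable {F : Type*} [Field F] {p k : ℕ} [ExpChar F p]

theorem mem_ker_skewForm (hfix : ∀ y : F, y ^ p ^ k = y → y = 0 ∨ y = 1) {z x : F} (hz : z ≠ 0)
    (hx : skewForm p k z x = 0) : x = 0 ∨ x = z :=
  eq_zero_or_eq_of_pow_mul_eq hfix hz <| by
    rw [skewForm_apply, sub_eq_zero] at hx
    linear_combination hx

theorem skewForm_eq_zero_or_eq (hfix : ∀ y : F, y ^ p ^ k = y → y = 0 ∨ y = 1)
    {β γ z x : F} (hβ : β ≠ 0) (hz : linearizedForm p k β γ z = 0)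
    (hx : linearizedForm p k β γ x = 0) : skewForm p k z x = 0 ∨ skewForm p k z x = β :=
  eq_zero_or_eq_of_pow_mul_eq hfix hβ <| by
    linear_combination
      skewForm_linearizedForm (p := p) (k := k) β γ z x + z ^ p ^ k * hx - x ^ p ^ k * hz

theorem ncard_setOf_linearizedForm_eq_zero_le [Finite F]
    (hfix : ∀ y : F, y ^ p ^ k = y → y = 0 ∨ y = 1) {β : F} (hβ : β ≠ 0) (γ : F) :
    {x : F | linearizedForm p k β γ x = 0}.ncard ≤ 4 := by
  classical
  by_cases hS : ∃ z, linearizedForm p k β γ z = 0 ∧ z ≠ 0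
  · obtain ⟨z, hz, hz0⟩ := hS
    have hker : ((skewForm p k z).ker : Set F).ncard ≤ 2 :=
      (Set.ncard_le_ncard fun x hx => mem_ker_skewForm hfix hz0 hx).trans <|
        (Set.ncard_insert_le 0 {z}).trans_eq (by rw [Set.ncard_singleton])
    calc {x : F | linearizedForm p k β γ x = 0}.ncard
        ≤ (skewForm p k z ⁻¹' ↑({0, β} : Finset F)).ncard :=
          Set.ncard_le_ncard fun x hx => by simpa using skewForm_eq_zero_or_eq hfix hβ hz hx
      _ ≤ #{0, β} * ((skewForm p k z).ker : Set F).ncard := (skewForm p k z).ncard_preimage_le _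
      _ ≤ 2 * 2 := Nat.mul_le_mul card_le_two hker
  · push Not at hS
    calc {x : F | linearizedForm p k β γ x = 0}.ncard ≤ ({0} : Set F).ncard :=
          Set.ncard_le_ncard fun x hx => Set.mem_singleton_iff.mpr (hS x hx)
      _ ≤ 4 := by simp

end TrivialFixedPoints

theorem stmt_11_general (n k : ℕ) (hgcd : Nat.gcd k n = 1)
    (F : Type*) [Field F] [Fintype F] (hF : Fintype.card F = 2 ^ n)
    (β γ : F) (hβ : β ≠ 0) :
    {x : F | β * x ^ (2 ^ (2 * k)) + γ * x ^ (2 ^ k) + β ^ (2 ^ k) * x = 0}.ncard ≤ 4 := by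
  have : Fact (Nat.Prime 2) := ⟨Nat.prime_two⟩
  have : CharP F 2 := charP_of_card_eq_prime_pow hF
  have hfix (y : F) (hy : y ^ 2 ^ k = y) : y = 0 ∨ y = 1 :=
    IsIdempotentElem.iff_eq_zero_or_one.mp <| by
      simpa [IsIdempotentElem, sq] using pow_eq_self_of_pow_pow_eq_self hF hgcd hy
  exact ncard_setOf_linearizedForm_eq_zero_le hfix hβ γ

theorem stmt_11 (n k : ℕ) (hn : 0 < n) (hk : 0 < k) (hgcd : Nat.gcd k n = 1)
    (F : Type*) [Field F] [Fintype F] (hF : Fintype.card F = 2 ^ n)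
    (β γ : F) (hβ : β ≠ 0) :
    {x : F | β * x ^ (2 ^ (2 * k)) + γ * x ^ (2 ^ k) + β ^ (2 ^ k) * x = 0}.ncard ≤ 4 :=
  stmt_11_general n k hgcd F hF β γ hβ
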